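/- Let (L, A, [·,·], ρ) be a Lie-Rinehart algebra and τ : L → F a trace (τ([L,L]) = 0) satisfying τ(ax)y = τ(x)ay for all x,y ∈ L, a ∈ A. Define [x₁,x₂,x₃]_τ = τ(x₁)[x₂,x₃] − τ(x₂)[x₁,x₃] + τ(x₃)[x₁,x₂] and ρ_τ(x,y) = τ(x)ρ(y) − τ(y)ρ(x). Then (L, A, [·,·,·]_τ, ρ_τ) is a 3-Lie-Rinehart algebra; in particular ρ_τ(L,L) ⊆ Der(A), [x,y,az]_τ = a[x,y,z]_τ + ρ_τ(x,y)(a)z, and ρ_τ(ax,y) = ρ_τ(x,ay) = aρ_τ(x,y). -/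
import Mathlib


/-- The ternary bracket induced by a trace `τ`. -/
def tauBracket {F : Type*} [Field F] {L : Type*} [LieRing L] [LieAlgebra F L]
    (τ : L →ₗ[F] F) (x y z : L) : L :=
  τ x • ⁅y, z⁆ - τ y • ⁅x, z⁆ + τ z • ⁅x, y⁆

/-- The induced binary anchor `ρ_τ(x,y) = τ(x)ρ(y) − τ(y)ρ(x)`. -/
def tauRho {F : Type*} [Field F] {A : Type*} [CommRing A] [Algebra F A]
    {L : Type*} [LieRing L] [LieAlgebra F L]
    (τ : L →ₗ[F] F) (ρ : L →ₗ[F] Module.End F A) (x y : L) : Module.End F A :=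
  τ x • ρ y - τ y • ρ x

/-- From a Lie–Rinehart algebra `(L, A, [·,·], ρ)` and a trace `τ` with
`τ(ax)y = τ(x)ay`, the data `(L, A, [·,·,·]_τ, ρ_τ)` is a `3`-Lie–Rinehart
algebra: `[·,·,·]_τ` makes `L` a `3`-Lie algebra, `ρ_τ(L,L) ⊆ Der(A)`,
`[x,y,az]_τ = a[x,y,z]_τ + ρ_τ(x,y)(a)z`, and `ρ_τ(ax,y) = ρ_τ(x,ay) = aρ_τ(x,y)`. -/
theorem lieRinehart_to_threeLieRinehart {F : Type*} [Field F] [CharZero F]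
    {A : Type*} [CommRing A] [Algebra F A]
    {L : Type*} [LieRing L] [LieAlgebra F L] [Module A L] [IsScalarTower F A L]
    (ρ : L →ₗ[F] Module.End F A)
    (hρ_der : ∀ (x : L) (a b : A), ρ x (a * b) = a * ρ x b + ρ x a * b)
    (hcompat : ∀ (x y : L) (a : A), ⁅x, a • y⁆ = a • ⁅x, y⁆ + ρ x a • y)
    (hρA : ∀ (a : A) (x : L), ρ (a • x) = a • ρ x)
    (τ : L →ₗ[F] F) (hτ : ∀ x y : L, τ ⁅x, y⁆ = 0)
    (hτA : ∀ (a : A) (x y : L), τ (a • x) • y = τ x • (a • y)) :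
    (∀ x y z : L, tauBracket τ x y z = - tauBracket τ y x z) ∧
    (∀ x y z : L, tauBracket τ x y z = - tauBracket τ x z y) ∧
    (∀ x₁ x₂ x₃ y₁ y₂ : L,
      tauBracket τ (tauBracket τ x₁ x₂ x₃) y₁ y₂ =
        tauBracket τ (tauBracket τ x₁ y₁ y₂) x₂ x₃ +
        tauBracket τ (tauBracket τ x₂ y₁ y₂) x₃ x₁ +
        tauBracket τ (tauBracket τ x₃ y₁ y₂) x₁ x₂) ∧
    (∀ (x y : L) (a b : A),
      tauRho τ ρ x y (a * b) = a * tauRho τ ρ x y b + tauRho τ ρ x y a * b) ∧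
    (∀ (x y z : L) (a : A),
      tauBracket τ x y (a • z) = a • tauBracket τ x y z + tauRho τ ρ x y a • z) ∧
    (∀ (a : A) (x y : L), tauRho τ ρ (a • x) y = a • tauRho τ ρ x y) ∧
    (∀ (a : A) (x y : L), tauRho τ ρ x (a • y) = a • tauRho τ ρ x y) := by
  -- transfer `hτA` to an identity of endomorphisms of `A`
  have key : ∀ (a : A) (x z : L), τ (a • x) • ρ z = a • (τ x • ρ z) := by
    intro a x z
    have h1 : ρ (τ (a • x) • z) = ρ (τ x • (a • z)) := by rw [hτA]
    simpa [map_smul, hρA, smul_comm (τ x) a] using h1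
  refine ⟨?_, ?_, ?_, ?_, ?_, ?_, ?_⟩
  · intro x y z
    simp only [tauBracket, ← lie_skew y x, ← lie_skew z x, ← lie_skew z y, smul_neg]
    abel
  · intro x y z
    simp only [tauBracket, ← lie_skew y x, ← lie_skew z x, ← lie_skew z y, smul_neg]
    abel
  · intro x₁ x₂ x₃ y₁ y₂
    have jac : ∀ a b c : L, ⁅c, ⁅a, b⁆⁆ = -⁅a, ⁅b, c⁆⁆ + ⁅b, ⁅a, c⁆⁆ := by
      intro a b c
      rw [← lie_skew c ⁅a, b⁆, lie_lie]
      abel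
    simp only [tauBracket, map_add, map_sub, map_smul, hτ, smul_eq_mul, mul_zero, zero_smul,
      add_zero, sub_zero, zero_sub, zero_add, sub_lie, add_lie, smul_lie, lie_lie, lie_sub,
      lie_add, lie_smul, smul_sub, smul_add, smul_neg, neg_smul, smul_smul,
      ← lie_skew x₂ x₁, ← lie_skew x₃ x₁, ← lie_skew x₃ x₂,
      ← lie_skew y₁ x₁, ← lie_skew y₁ x₂, ← lie_skew y₁ x₃,
      ← lie_skew y₂ x₁, ← lie_skew y₂ x₂, ← lie_skew y₂ x₃, ← lie_skew y₂ y₁,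
      lie_neg, neg_neg,
      jac x₁ x₂ x₃, jac x₁ x₂ y₁, jac x₁ x₃ y₁, jac x₂ x₃ y₁,
      jac x₁ x₂ y₂, jac x₁ x₃ y₂, jac x₂ x₃ y₂,
      jac x₁ y₁ y₂, jac x₂ y₁ y₂, jac x₃ y₁ y₂]
    module
  · intro x y a b
    simp only [tauRho, LinearMap.sub_apply, LinearMap.smul_apply, hρ_der]
    simp only [Algebra.smul_def]
    ring
  · intro x y z a
    have hτz : τ (a • z) • ⁅x, y⁆ = τ z • (a • ⁅x, y⁆) := hτA a z ⁅x, y⁆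
    simp only [tauBracket, hcompat, tauRho, LinearMap.sub_apply, LinearMap.smul_apply,
      smul_add, smul_sub, hτz, sub_smul, smul_assoc, smul_comm (τ x) a, smul_comm (τ y) a,
      smul_comm (τ z) a]
    abel
  · intro a x y
    have h2 : τ y • ρ (a • x) = a • (τ y • ρ x) := by
      rw [hρA, smul_comm]
    simp only [tauRho, key, h2, smul_sub]
  · intro a x y
    have h2 : τ x • ρ (a • y) = a • (τ x • ρ y) := by
      rw [hρA, smul_comm]
    simp only [tauRho, key, h2, smul_sub]
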